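/- Let m > 0 and λ, λ' > 0, and let f : ℝ³ → ℂ be measurable with ∫_{ℝ³} (1+|p|²)^{−1/2} |f(p)|² dp < ∞. Then ∬_{ℝ³×ℝ³} ( conj(f(p)) − conj(f(q)) )( f(p) − f(q) ) / ( (G(p,q)+λ')(G(p,q)+λ) ) dp dq = 2 ∫_{ℝ³} conj(f(p)) ( 2π² f(p) / ( √(ν|p|²+λ) + √(ν|p|²+λ') ) − ∫_{ℝ³} f(q) / ( (G(p,q)+λ)(G(p,q)+λ') ) dq ) dp. -/

import Mathlib

open MeasureTheory
open scoped RealInnerProductSpace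

noncomputable section

abbrev E3 := EuclideanSpace ℝ (Fin 3)

def mu (m : ℝ) : ℝ := 2 / (m + 1)

def nu (m : ℝ) : ℝ := m * (m + 2) / (m + 1) ^ 2

def Gker (m : ℝ) (p q : E3) : ℝ := ‖p‖ ^ 2 + ‖q‖ ^ 2 + mu m * ⟪p, q⟫

/-! Expanding the numerator, the integrand splits into the diagonal terms `|f p|² K`, `|f q|² K`
and the cross terms `conj (f p) f q K`, `conj (f q) f p K`, where `K = ((G + λ) (G + λ'))⁻¹` is
symmetric in `p, q`. Swapping `p ↔ q` identifies the two diagonal terms and the two cross terms,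
and by AM-GM the cross terms are dominated by the diagonal ones, so Fubini applies as soon as
`p ↦ |f p|² ∫ K(p, q) dq` is integrable. Completing the square,
`G(p, q) + λ = |q + (μ/2) p|² + ν |p|² + λ`, so a translation and polar coordinates give
`∫ K(p, q) dq = 2π² / (√(ν|p|² + λ) + √(ν|p|² + λ'))`, which is `O((1 + |p|²)^(-1/2))`. -/

open Real Filter Set Topology

section SymmetricKernel

variable {α : Type*} [MeasurableSpace α] {μ : Measure α} [SFinite μ] {k : α → α → ℝ}
  {f : α → ℂ}

theorem integrable_star_mul_self_mul_kernel
    (hk_meas : AEStronglyMeasurable (Function.uncurry k) (μ.prod μ))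
    (hk_nonneg : ∀ p q, 0 ≤ k p q) (hk_int : ∀ p, Integrable (k p) μ)
    (hf : AEStronglyMeasurable f μ) (hfk : Integrable (fun p => ‖f p‖ ^ 2 * ∫ q, k p q ∂μ) μ) :
    Integrable (fun z : α × α => star (f z.1) * (f z.1 * k z.1 z.2)) (μ.prod μ) := by
  have hk_meas' := Complex.continuous_ofReal.comp_aestronglyMeasurable hk_meas
  refine (integrable_prod_iff ?_).2 ⟨.of_forall fun p => ?_, ?_⟩
  · exact hf.comp_fst.star.mul (hf.comp_fst.mul hk_meas')
  · exact ((hk_int p).ofReal.const_mul (f p)).const_mul (star (f p))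
  · refine hfk.congr (.of_forall fun p => ?_)
    simp only [norm_mul, norm_star, Complex.norm_real, Real.norm_of_nonneg (hk_nonneg _ _)]
    rw [integral_const_mul, integral_const_mul, sq, mul_assoc]

theorem integrable_star_mul_mul_kernel
    (hk_meas : AEStronglyMeasurable (Function.uncurry k) (μ.prod μ))
    (hk_nonneg : ∀ p q, 0 ≤ k p q) (hk_symm : ∀ p q, k p q = k q p)
    (hk_int : ∀ p, Integrable (k p) μ)
    (hf : AEStronglyMeasurable f μ) (hfk : Integrable (fun p => ‖f p‖ ^ 2 * ∫ q, k p q ∂μ) μ) :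
    Integrable (fun z : α × α => star (f z.1) * (f z.2 * k z.1 z.2)) (μ.prod μ) := by
  have hk_meas' := Complex.continuous_ofReal.comp_aestronglyMeasurable hk_meas
  have hD := integrable_star_mul_self_mul_kernel hk_meas hk_nonneg hk_int hf hfk
  refine ((hD.norm.add hD.swap.norm).div_const 2).mono'
    (hf.comp_fst.star.mul (hf.comp_snd.mul hk_meas')) (.of_forall fun z => ?_)
  simp only [Pi.add_apply, Function.comp_apply, Prod.fst_swap, Prod.snd_swap,
    ← hk_symm z.1 z.2, norm_mul, norm_star, Complex.norm_real, Real.norm_of_nonneg (hk_nonneg _ _)]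
  nlinarith [mul_nonneg (sq_nonneg (‖f z.1‖ - ‖f z.2‖)) (hk_nonneg z.1 z.2)]

theorem integral_integral_star_sub_mul_sub_mul_kernel
    (hk_meas : AEStronglyMeasurable (Function.uncurry k) (μ.prod μ))
    (hk_nonneg : ∀ p q, 0 ≤ k p q) (hk_symm : ∀ p q, k p q = k q p)
    (hk_int : ∀ p, Integrable (k p) μ)
    (hf : AEStronglyMeasurable f μ) (hfk : Integrable (fun p => ‖f p‖ ^ 2 * ∫ q, k p q ∂μ) μ) :
    ∫ p, ∫ q, (star (f p) - star (f q)) * (f p - f q) * k p q ∂μ ∂μ =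
      2 * ∫ p, star (f p) * (f p * (∫ q, k p q ∂μ : ℝ) - ∫ q, f q * k p q ∂μ) ∂μ := by
  set D : α × α → ℂ := fun z => star (f z.1) * (f z.1 * k z.1 z.2)
  set C : α × α → ℂ := fun z => star (f z.1) * (f z.2 * k z.1 z.2)
  have hD : Integrable D (μ.prod μ) :=
    integrable_star_mul_self_mul_kernel hk_meas hk_nonneg hk_int hf hfk
  have hC : Integrable C (μ.prod μ) :=
    integrable_star_mul_mul_kernel hk_meas hk_nonneg hk_symm hk_int hf hfk
  have hsplit : ∀ z : α × α, (star (f z.1) - star (f z.2)) * (f z.1 - f z.2) * k z.1 z.2 =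
      D z + D z.swap - (C z + C z.swap) := fun z => by
    simp only [D, C, Prod.fst_swap, Prod.snd_swap, hk_symm z.2 z.1]; ring
  have hinner : ∀ p, star (f p) * (f p * (∫ q, k p q ∂μ : ℝ) - ∫ q, f q * k p q ∂μ) =
      (∫ q, D (p, q) ∂μ) - ∫ q, C (p, q) ∂μ := fun p => by
    simp only [D, C, integral_const_mul, mul_sub, integral_complex_ofReal]
  calc ∫ p, ∫ q, (star (f p) - star (f q)) * (f p - f q) * k p q ∂μ ∂μ
      = ∫ z, D z + D z.swap - (C z + C z.swap) ∂μ.prod μ := by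
        rw [integral_integral ?_]
        · exact integral_congr_ae (.of_forall hsplit)
        · exact ((hD.add hD.swap).sub (hC.add hC.swap)).congr
            (.of_forall fun z => (hsplit z).symm)
    _ = 2 * ((∫ z, D z ∂μ.prod μ) - ∫ z, C z ∂μ.prod μ) := by
        have hDs : Integrable (fun z => D z.swap) (μ.prod μ) := hD.swap
        have hCs : Integrable (fun z => C z.swap) (μ.prod μ) := hC.swap
        rw [integral_sub (f := fun z => D z + D z.swap) (g := fun z => C z + C z.swap)
            (hD.add hDs) (hC.add hCs),
          integral_add hD hDs, integral_add hC hCs, integral_prod_swap, integral_prod_swap]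
        ring
    _ = _ := by
        simp_rw [hinner]
        rw [integral_sub hD.integral_prod_left hC.integral_prod_left, integral_prod D hD,
          integral_prod C hC]

end SymmetricKernel

theorem hasDerivAt_mul_arctan_div {s : ℝ} (hs : s ≠ 0) (x : ℝ) :
    HasDerivAt (fun r => s * arctan (r / s)) (s ^ 2 / (x ^ 2 + s ^ 2)) x := by
  refine ((((hasDerivAt_id' x).div_const s).arctan).const_mul s).congr_deriv ?_
  field_simp
  ring

theorem tendsto_mul_arctan_div_atTop {s : ℝ} (hs : 0 < s) :
    Tendsto (fun r => s * arctan (r / s)) atTop (𝓝 (s * (π / 2))) :=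
  ((tendsto_arctan_atTop.mono_right nhdsWithin_le_nhds).comp
    (tendsto_id.atTop_div_const hs)).const_mul s

theorem tendsto_div_sq_add_sq_atTop (s : ℝ) :
    Tendsto (fun r => r / (r ^ 2 + s ^ 2)) atTop (𝓝 0) := by
  refine squeeze_zero' (eventually_gt_atTop 0 |>.mono fun r hr => by positivity)
    (eventually_gt_atTop 0 |>.mono fun r hr => ?_) tendsto_inv_atTop_zero
  rw [div_le_iff₀ (by positivity), inv_mul_eq_div, le_div_iff₀ hr]
  nlinarith [sq_nonneg s]

theorem exists_hasDerivAt_sq_div_sq_add_sq_mul_sq_add_sq {s t : ℝ} (hs : 0 < s) (ht : 0 < t) :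
    ∃ g : ℝ → ℝ, (∀ x, HasDerivAt g (x ^ 2 / ((x ^ 2 + s ^ 2) * (x ^ 2 + t ^ 2))) x) ∧
      Tendsto g atTop (𝓝 (g 0 + π / (2 * (s + t)))) := by
  rcases eq_or_ne s t with rfl | hst
  · refine ⟨fun r => (s * arctan (r / s) - s ^ 2 * (r / (r ^ 2 + s ^ 2))) / (2 * s ^ 2),
      fun x => ?_, ?_⟩
    · have hq : HasDerivAt (fun r => r / (r ^ 2 + s ^ 2))
          ((1 * (x ^ 2 + s ^ 2) - x * (2 * x)) / (x ^ 2 + s ^ 2) ^ 2) x :=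
        (hasDerivAt_id x).div ((hasDerivAt_pow 2 x).add_const _ |>.congr_deriv (by ring))
          (by positivity)
      refine (((hasDerivAt_mul_arctan_div hs.ne' x).sub (hq.const_mul (s ^ 2))).div_const
        (2 * s ^ 2)).congr_deriv ?_
      field_simp
      ring
    · convert ((tendsto_mul_arctan_div_atTop hs).sub
        ((tendsto_div_sq_add_sq_atTop s).const_mul (s ^ 2))).div_const (2 * s ^ 2) using 2
      simp only [zero_div, arctan_zero, mul_zero, ne_eq, OfNat.ofNat_ne_zero, not_false_eq_true,
        zero_pow, zero_add, sub_self, sub_zero]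
      field_simp
      ring
  · -- partial fractions: `t² / (x² + t²) - s² / (x² + s²) = (t² - s²) x² / ((x² + s²)(x² + t²))`
    have hst2 : t ^ 2 - s ^ 2 ≠ 0 := fun h => hst (by nlinarith)
    refine ⟨fun r => (t * arctan (r / t) - s * arctan (r / s)) / (t ^ 2 - s ^ 2),
      fun x => ?_, ?_⟩
    · refine (((hasDerivAt_mul_arctan_div ht.ne' x).sub
        (hasDerivAt_mul_arctan_div hs.ne' x)).div_const (t ^ 2 - s ^ 2)).congr_deriv ?_
      field_simp
      ring
    · convert ((tendsto_mul_arctan_div_atTop ht).sub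
        (tendsto_mul_arctan_div_atTop hs)).div_const (t ^ 2 - s ^ 2) using 2
      simp only [zero_div, arctan_zero, mul_zero, sub_zero, zero_add]
      rw [eq_div_iff hst2]
      field_simp
      ring

theorem integrableOn_Ioi_sq_div_sq_add_sq_mul_sq_add_sq {s t : ℝ} (hs : 0 < s) (ht : 0 < t) :
    IntegrableOn (fun r => r ^ 2 / ((r ^ 2 + s ^ 2) * (r ^ 2 + t ^ 2))) (Ioi 0) := by
  obtain ⟨g, hg, hlim⟩ := exists_hasDerivAt_sq_div_sq_add_sq_mul_sq_add_sq hs ht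
  exact integrableOn_Ioi_deriv_of_nonneg' (fun x _ => hg x) (fun x _ => by positivity) hlim

theorem integral_Ioi_sq_div_sq_add_sq_mul_sq_add_sq {s t : ℝ} (hs : 0 < s) (ht : 0 < t) :
    ∫ r in Ioi 0, r ^ 2 / ((r ^ 2 + s ^ 2) * (r ^ 2 + t ^ 2)) = π / (2 * (s + t)) := by
  obtain ⟨g, hg, hlim⟩ := exists_hasDerivAt_sq_div_sq_add_sq_mul_sq_add_sq hs ht
  rw [integral_Ioi_of_hasDerivAt_of_nonneg' (fun x _ => hg x) (fun x _ => by positivity) hlim]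
  ring

theorem integrable_inv_norm_sq_add_sq_mul_norm_sq_add_sq {s t : ℝ} (hs : 0 < s) (ht : 0 < t) :
    Integrable fun y : EuclideanSpace ℝ (Fin 3) => ((‖y‖ ^ 2 + s ^ 2) * (‖y‖ ^ 2 + t ^ 2))⁻¹ := by
  refine (integrable_fun_norm_addHaar volume
    (f := fun r => ((r ^ 2 + s ^ 2) * (r ^ 2 + t ^ 2))⁻¹)).2 ?_
  refine (integrableOn_Ioi_sq_div_sq_add_sq_mul_sq_add_sq hs ht).congr_fun (fun r _ => ?_)
    measurableSet_Ioi
  simp [div_eq_mul_inv]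

theorem integral_inv_norm_sq_add_sq_mul_norm_sq_add_sq {s t : ℝ} (hs : 0 < s) (ht : 0 < t) :
    ∫ y : EuclideanSpace ℝ (Fin 3), ((‖y‖ ^ 2 + s ^ 2) * (‖y‖ ^ 2 + t ^ 2))⁻¹ =
      2 * π ^ 2 / (s + t) := by
  rw [integral_fun_norm_addHaar volume (fun r => ((r ^ 2 + s ^ 2) * (r ^ 2 + t ^ 2))⁻¹)]
  have h1 : ∫ r in Ioi (0 : ℝ), r ^ (Module.finrank ℝ (EuclideanSpace ℝ (Fin 3)) - 1) •
      ((r ^ 2 + s ^ 2) * (r ^ 2 + t ^ 2))⁻¹ = π / (2 * (s + t)) := by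
    rw [← integral_Ioi_sq_div_sq_add_sq_mul_sq_add_sq hs ht]
    simp [div_eq_mul_inv]
  rw [h1]
  simp only [finrank_euclideanSpace_fin, measureReal_def, EuclideanSpace.volume_ball_fin_three,
    ENNReal.ofReal_one, one_pow, one_mul, ENNReal.toReal_ofReal (by positivity : 0 ≤ π * 4 / 3)]
  rw [nsmul_eq_mul, smul_eq_mul]
  field_simp
  ring

theorem mu_sq_div_four_add_nu {m : ℝ} (hm : m + 1 ≠ 0) : mu m ^ 2 / 4 + nu m = 1 := by
  unfold mu nu
  field_simp
  ring

theorem nu_nonneg {m : ℝ} (hm : 0 ≤ m) : 0 ≤ nu m := by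
  unfold nu; positivity

theorem nu_pos {m : ℝ} (hm : 0 < m) : 0 < nu m := by
  unfold nu; positivity

theorem Gker_comm (m : ℝ) (p q : E3) : Gker m p q = Gker m q p := by
  unfold Gker; rw [real_inner_comm]; ring

theorem continuous_Gker (m : ℝ) : Continuous (Function.uncurry (Gker m)) := by
  unfold Function.uncurry Gker; fun_prop

theorem Gker_add_eq_norm_add_smul_sq {m : ℝ} (hm : m + 1 ≠ 0) (c : ℝ) (p q : E3) :
    Gker m p q + c = ‖q + (mu m / 2) • p‖ ^ 2 + (nu m * ‖p‖ ^ 2 + c) := by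
  have h := mu_sq_div_four_add_nu hm
  rw [Gker, norm_add_sq_real, real_inner_smul_right, norm_smul, mul_pow, Real.norm_eq_abs,
    sq_abs, real_inner_comm p q]
  linear_combination (-‖p‖ ^ 2) * h

theorem Gker_add_pos {m c : ℝ} (hm : 0 ≤ m) (hc : 0 < c) (p q : E3) : 0 < Gker m p q + c := by
  rw [Gker_add_eq_norm_add_smul_sq (by positivity) c p q]
  have := nu_nonneg hm
  positivity

theorem inv_Gker_add_mul_Gker_add_eq {m lam lam' : ℝ} (hm : 0 ≤ m) (hlam : 0 < lam)
    (hlam' : 0 < lam') (p q : E3) :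
    ((Gker m p q + lam) * (Gker m p q + lam'))⁻¹ =
      ((‖q + (mu m / 2) • p‖ ^ 2 + √(nu m * ‖p‖ ^ 2 + lam) ^ 2) *
        (‖q + (mu m / 2) • p‖ ^ 2 + √(nu m * ‖p‖ ^ 2 + lam') ^ 2))⁻¹ := by
  have := nu_nonneg hm
  rw [sq_sqrt (by positivity), sq_sqrt (by positivity),
    Gker_add_eq_norm_add_smul_sq (by positivity), Gker_add_eq_norm_add_smul_sq (by positivity)]

theorem integrable_inv_Gker_add_mul_Gker_add {m lam lam' : ℝ} (hm : 0 ≤ m) (hlam : 0 < lam)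
    (hlam' : 0 < lam') (p : E3) :
    Integrable fun q => ((Gker m p q + lam) * (Gker m p q + lam'))⁻¹ := by
  have := nu_nonneg hm
  simp_rw [inv_Gker_add_mul_Gker_add_eq hm hlam hlam' p]
  exact (integrable_inv_norm_sq_add_sq_mul_norm_sq_add_sq (by positivity)
    (by positivity)).comp_add_right _

theorem integral_inv_Gker_add_mul_Gker_add {m lam lam' : ℝ} (hm : 0 ≤ m) (hlam : 0 < lam)
    (hlam' : 0 < lam') (p : E3) :
    ∫ q, ((Gker m p q + lam) * (Gker m p q + lam'))⁻¹ =
      2 * π ^ 2 / (√(nu m * ‖p‖ ^ 2 + lam) + √(nu m * ‖p‖ ^ 2 + lam')) := by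
  have := nu_nonneg hm
  simp_rw [inv_Gker_add_mul_Gker_add_eq hm hlam hlam' p]
  rw [integral_add_right_eq_self (fun y : E3 => ((‖y‖ ^ 2 + _) * (‖y‖ ^ 2 + _))⁻¹),
    integral_inv_norm_sq_add_sq_mul_norm_sq_add_sq (by positivity) (by positivity)]

theorem inv_sqrt_add_sqrt_le {a b b' x : ℝ} (ha : 0 < a) (hb : 0 < b) (hx : 0 ≤ x) :
    (√(a * x + b) + √(a * x + b'))⁻¹ ≤ (√(min a b))⁻¹ * (1 + x) ^ (-(1 : ℝ) / 2) := by
  have hmin : min a b * (1 + x) ≤ a * x + b := by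
    nlinarith [min_le_left a b, min_le_right a b]
  rw [neg_div, rpow_neg (by positivity), ← sqrt_eq_rpow, ← mul_inv,
    ← sqrt_mul (le_min ha.le hb.le)]
  calc (√(a * x + b) + √(a * x + b'))⁻¹ ≤ (√(a * x + b))⁻¹ := by
        gcongr
        exact le_add_of_nonneg_right (sqrt_nonneg _)
    _ ≤ (√(min a b * (1 + x)))⁻¹ := by
        gcongr

theorem integrable_norm_sq_mul_div_sqrt_add_sqrt {E : Type*} [NormedAddCommGroup E]
    [MeasurableSpace E] [OpensMeasurableSpace E] {μ : Measure E} {f : E → ℂ} {a b b' C : ℝ}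
    (ha : 0 < a) (hb : 0 < b) (hf : AEStronglyMeasurable f μ)
    (hf2 : Integrable (fun p => (1 + ‖p‖ ^ 2) ^ (-(1 : ℝ) / 2) * ‖f p‖ ^ 2) μ) :
    Integrable (fun p => ‖f p‖ ^ 2 * (C / (√(a * ‖p‖ ^ 2 + b) + √(a * ‖p‖ ^ 2 + b')))) μ := by
  refine (hf2.const_mul (|C| * (√(min a b))⁻¹)).mono'
    ((hf.norm.pow 2).mul (by fun_prop : Measurable fun p : E =>
      C / (√(a * ‖p‖ ^ 2 + b) + √(a * ‖p‖ ^ 2 + b'))).aestronglyMeasurable)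
    (.of_forall fun p => ?_)
  have hS : 0 < √(a * ‖p‖ ^ 2 + b) + √(a * ‖p‖ ^ 2 + b') :=
    add_pos_of_pos_of_nonneg (sqrt_pos.2 (by positivity)) (sqrt_nonneg _)
  rw [norm_mul, norm_div, norm_pow, norm_norm, Real.norm_of_nonneg hS.le, Real.norm_eq_abs,
    div_eq_mul_inv]
  have := inv_sqrt_add_sqrt_le (b' := b') ha hb (sq_nonneg ‖p‖)
  calc ‖f p‖ ^ 2 * (|C| * (√(a * ‖p‖ ^ 2 + b) + √(a * ‖p‖ ^ 2 + b'))⁻¹)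
      ≤ ‖f p‖ ^ 2 * (|C| * ((√(min a b))⁻¹ * (1 + ‖p‖ ^ 2) ^ (-(1 : ℝ) / 2))) := by gcongr
    _ = |C| * (√(min a b))⁻¹ * ((1 + ‖p‖ ^ 2) ^ (-(1 : ℝ) / 2) * ‖f p‖ ^ 2) := by ring

/-- Identity between the double integral of
`(conj f(p) − conj f(q))(f(p) − f(q)) / ((G+λ')(G+λ))` and the single integral
of `conj f(p) (2π² f(p)/(√(ν p²+λ)+√(ν p²+λ')) − ∫ f(q)/((G+λ)(G+λ')) dq)`,
for charges `f` in (the Fourier image of) `H^{−1/2}(ℝ³)`. -/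
theorem potential_scalar_product_identity
    (m lam lam' : ℝ) (hm : 0 < m) (hlam : 0 < lam) (hlam' : 0 < lam')
    (f : E3 → ℂ) (hf : Measurable f)
    (hf2 : Integrable (fun p => (1 + ‖p‖ ^ 2) ^ (-(1 : ℝ) / 2) * ‖f p‖ ^ 2)) :
    (∫ p : E3, ∫ q : E3,
        (star (f p) - star (f q)) * (f p - f q) /
          (((Gker m p q + lam') * (Gker m p q + lam) : ℝ) : ℂ))
    = 2 * ∫ p : E3, star (f p) *
        (((2 * Real.pi ^ 2 : ℝ) : ℂ) * f p /
            ((Real.sqrt (nu m * ‖p‖ ^ 2 + lam) + Real.sqrt (nu m * ‖p‖ ^ 2 + lam') : ℝ) : ℂ)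
          - ∫ q : E3, f q / (((Gker m p q + lam) * (Gker m p q + lam') : ℝ) : ℂ)) := by
  set k : E3 → E3 → ℝ := fun p q => ((Gker m p q + lam) * (Gker m p q + lam'))⁻¹
  have hk_pos : ∀ p q, 0 < (Gker m p q + lam) * (Gker m p q + lam') := fun p q =>
    mul_pos (Gker_add_pos hm.le hlam p q) (Gker_add_pos hm.le hlam' p q)
  have hk_cont : Continuous (Function.uncurry k) :=
    (((continuous_Gker m).add continuous_const).mul
      ((continuous_Gker m).add continuous_const)).inv₀ fun z => (hk_pos z.1 z.2).ne'
  have hk_integral := integral_inv_Gker_add_mul_Gker_add hm.le hlam hlam'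
  have hfk := integrable_norm_sq_mul_div_sqrt_add_sqrt (b' := lam') (C := 2 * π ^ 2)
    (nu_pos hm) hlam hf.aestronglyMeasurable hf2
  have key := integral_integral_star_sub_mul_sub_mul_kernel (k := k)
    hk_cont.aestronglyMeasurable (fun p q => (inv_pos.2 (hk_pos p q)).le)
    (fun p q => by simp only [k, Gker_comm m p q])
    (integrable_inv_Gker_add_mul_Gker_add hm.le hlam hlam') hf.aestronglyMeasurable
    (by simpa only [k, hk_integral] using hfk)
  simp only [k, hk_integral, Complex.ofReal_inv, Complex.ofReal_div, ← div_eq_mul_inv,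
    mul_div_assoc', mul_comm (f _) ((2 * π ^ 2 : ℝ) : ℂ)] at key
  simp only [mul_comm (Gker m _ _ + lam')]
  exact key
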